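/- (Theorem 3, optimal joint activity–offset coordinate update.) Let X be a nonempty finite set, κ > 0, and let α : X → ℝ with α(x) > 0 for all x, and β, η : X → ℝ. Define F(a, x) = log(1 + α(x)a) + (κα(x)a² − (β(x)+η(x))a)/(1 + α(x)a) for (a, x) ∈ [0,1] × X. For each x ∈ X define d(x) = min{max{d̂(x), 0}, 1} if 4κ(κ+β(x)+η(x)) + α(x)² > 0, where d̂(x) = (−α(x) − 2κ + √(4κ(κ+β(x)+η(x)) + α(x)²))/(2κα(x)), and d(x) = 0 otherwise; and define h(x) = F(d(x), x). Then for any x* ∈ argmin_{x ∈ X} h(x), the pair (d(x*), x*) is a global minimizer of F over [0,1] × X, i.e., F(d(x*), x*) ≤ F(a, x) for all a ∈ [0,1] and x ∈ X. -/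

import Mathlib

/-!
Writing `Δ = 4κ(κ + c) + α²` and `c = β + η`, the derivative of `a ↦ F(a, x)` is
`((2καa + α + 2κ)² - Δ) / (4κ(1 + αa)²)`. For `a ≥ 0` the base `2καa + α + 2κ` is positive, so
`F(·, x)` decreases on `[0, 1]` up to the stationary point `(√Δ - α - 2κ) / (2κα)` and increases
after it (everywhere when `Δ ≤ 0`); hence `d(x)`, the stationary point clamped to `[0, 1]`,
minimizes `F(·, x)` on `[0, 1]`. Then `F(d(x*), x*) ≤ F(d(x), x) ≤ F(a, x)`.
-/

open Real Set

section Clamp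

variable {f : ℝ → ℝ} {lo hi r : ℝ}

lemma isMinOn_min_max_of_antitoneOn_of_monotoneOn (hanti : AntitoneOn f (Icc lo hi ∩ Iic r))
    (hmono : MonotoneOn f (Icc lo hi ∩ Ici r)) : IsMinOn f (Icc lo hi) (min (max r lo) hi) := by
  rw [isMinOn_iff]
  rintro a ⟨hloa, hahi⟩
  rcases le_total a r with har | hra
  · have hm : min (max r lo) hi = min r hi := by rw [max_eq_left (hloa.trans har)]
    rw [hm]
    exact hanti ⟨⟨hloa, hahi⟩, har⟩
      ⟨⟨le_min (hloa.trans har) (hloa.trans hahi), min_le_right _ _⟩, min_le_left r hi⟩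
      (le_min har hahi)
  · have hm : min (max r lo) hi = max r lo := min_eq_left (max_le (hra.trans hahi) (hloa.trans hahi))
    rw [hm]
    exact hmono ⟨⟨le_max_right _ _, max_le (hra.trans hahi) (hloa.trans hahi)⟩, le_max_left r lo⟩
      ⟨⟨hloa, hahi⟩, hra⟩ (max_le hra hloa)

end Clamp

noncomputable section ActivityCost

def activityCost (κ α c a : ℝ) : ℝ :=
  log (1 + α * a) + (κ * α * a ^ 2 - c * a) / (1 + α * a)

def activityDiscr (κ α c : ℝ) : ℝ := 4 * κ * (κ + c) + α ^ 2

def stationaryActivity (κ α c : ℝ) : ℝ := (-α - 2 * κ + √(activityDiscr κ α c)) / (2 * κ * α)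

def optimalActivity (κ α c : ℝ) : ℝ :=
  if 0 < activityDiscr κ α c then min (max (stationaryActivity κ α c) 0) 1 else 0

variable {κ α c a : ℝ}

lemma hasDerivAt_activityCost (hκ : κ ≠ 0) (ha : 1 + α * a ≠ 0) :
    HasDerivAt (activityCost κ α c)
      (((2 * κ * α * a + α + 2 * κ) ^ 2 - activityDiscr κ α c) / (4 * κ * (1 + α * a) ^ 2)) a := by
  have hlin : HasDerivAt (fun a => 1 + α * a) α a := by
    simpa using ((hasDerivAt_id a).const_mul α).const_add 1
  have hnum := ((hasDerivAt_pow 2 a).const_mul (κ * α)).fun_sub ((hasDerivAt_id' a).const_mul c)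
  refine ((hlin.log ha).add (hnum.div hlin ha)).congr_deriv ?_
  unfold activityDiscr
  field_simp
  ring

lemma monotoneOn_activityCost {D : Set ℝ} (hκ : 0 < κ) (hD : Convex ℝ D)
    (hD₀ : ∀ a ∈ D, 1 + α * a ≠ 0)
    (hsign : ∀ a ∈ D, activityDiscr κ α c ≤ (2 * κ * α * a + α + 2 * κ) ^ 2) :
    MonotoneOn (activityCost κ α c) D :=
  monotoneOn_of_hasDerivWithinAt_nonneg hD
    (fun a ha => (hasDerivAt_activityCost hκ.ne' (hD₀ a ha)).continuousAt.continuousWithinAt)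
    (fun a ha => (hasDerivAt_activityCost hκ.ne' (hD₀ a (interior_subset ha))).hasDerivWithinAt)
    (fun a ha => div_nonneg (sub_nonneg.2 (hsign a (interior_subset ha))) (by positivity))

lemma antitoneOn_activityCost {D : Set ℝ} (hκ : 0 < κ) (hD : Convex ℝ D)
    (hD₀ : ∀ a ∈ D, 1 + α * a ≠ 0)
    (hsign : ∀ a ∈ D, (2 * κ * α * a + α + 2 * κ) ^ 2 ≤ activityDiscr κ α c) :
    AntitoneOn (activityCost κ α c) D :=
  antitoneOn_of_hasDerivWithinAt_nonpos hD
    (fun a ha => (hasDerivAt_activityCost hκ.ne' (hD₀ a ha)).continuousAt.continuousWithinAt)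
    (fun a ha => (hasDerivAt_activityCost hκ.ne' (hD₀ a (interior_subset ha))).hasDerivWithinAt)
    (fun a ha => div_nonpos_of_nonpos_of_nonneg (sub_nonpos.2 (hsign a (interior_subset ha)))
      (by positivity))

lemma le_stationaryActivity_iff (hκ : 0 < κ) (hα : 0 < α) :
    a ≤ stationaryActivity κ α c ↔ 2 * κ * α * a + α + 2 * κ ≤ √(activityDiscr κ α c) := by
  rw [stationaryActivity, le_div_iff₀ (by positivity)]
  constructor <;> intro h <;> linarith

lemma stationaryActivity_le_iff (hκ : 0 < κ) (hα : 0 < α) :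
    stationaryActivity κ α c ≤ a ↔ √(activityDiscr κ α c) ≤ 2 * κ * α * a + α + 2 * κ := by
  rw [stationaryActivity, div_le_iff₀ (by positivity)]
  constructor <;> intro h <;> linarith

lemma isMinOn_activityCost_optimalActivity (hκ : 0 < κ) (hα : 0 < α) :
    IsMinOn (activityCost κ α c) (Icc 0 1) (optimalActivity κ α c) := by
  have hbase_pos : ∀ a ∈ Icc (0 : ℝ) 1, 0 < 2 * κ * α * a + α + 2 * κ := fun a ha => by
    have := ha.1; positivity
  have hD₀ : ∀ D ⊆ Icc (0 : ℝ) 1, ∀ a ∈ D, 1 + α * a ≠ 0 := fun D hD a ha => by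
    have := (hD ha).1; positivity
  unfold optimalActivity
  split_ifs with hΔ
  · apply isMinOn_min_max_of_antitoneOn_of_monotoneOn
    · refine antitoneOn_activityCost hκ ((convex_Icc 0 1).inter (convex_Iic _))
        (hD₀ _ inter_subset_left) fun a ha => ?_
      exact (le_sqrt' (hbase_pos a ha.1)).1 ((le_stationaryActivity_iff hκ hα).1 ha.2)
    · refine monotoneOn_activityCost hκ ((convex_Icc 0 1).inter (convex_Ici _))
        (hD₀ _ inter_subset_left) fun a ha => ?_
      exact (sqrt_le_left (hbase_pos a ha.1).le).1 ((stationaryActivity_le_iff hκ hα).1 ha.2)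
  · rw [isMinOn_iff]
    intro a ha
    refine monotoneOn_activityCost hκ (convex_Icc 0 1) (hD₀ _ subset_rfl) (fun b _ => ?_)
      ⟨le_rfl, zero_le_one⟩ ha ha.1
    exact (not_lt.1 hΔ).trans (sq_nonneg _)

end ActivityCost

theorem stmt_8_general {X : Type*}
    (κ : ℝ) (hκ : 0 < κ) (α β η : X → ℝ) (hα : ∀ x, 0 < α x) :
    let F : ℝ → X → ℝ := fun a x =>
      Real.log (1 + α x * a) + (κ * α x * a ^ 2 - (β x + η x) * a) / (1 + α x * a)
    let d : X → ℝ := fun x =>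
      if 0 < 4 * κ * (κ + β x + η x) + α x ^ 2 then
        min (max ((-α x - 2 * κ + Real.sqrt (4 * κ * (κ + β x + η x) + α x ^ 2)) / (2 * κ * α x)) 0) 1
      else 0
    ∀ xstar : X, (∀ x, F (d xstar) xstar ≤ F (d x) x) →
      ∀ a ∈ Set.Icc (0 : ℝ) 1, ∀ x, F (d xstar) xstar ≤ F a x := by
  intro F d xstar hmin a ha x
  have hd : d x = optimalActivity κ (α x) (β x + η x) := by
    simp only [d, optimalActivity, stationaryActivity, activityDiscr, add_assoc]
    rfl
  calc F (d xstar) xstar ≤ F (d x) x := hmin x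
    _ = activityCost κ (α x) (β x + η x) (optimalActivity κ (α x) (β x + η x)) := by rw [hd]; rfl
    _ ≤ F a x := isMinOn_iff.1 (isMinOn_activityCost_optimalActivity hκ (hα x)) a ha

theorem stmt_8 {X : Type*} [Fintype X] [Nonempty X]
    (κ : ℝ) (hκ : 0 < κ) (α β η : X → ℝ) (hα : ∀ x, 0 < α x) :
    let F : ℝ → X → ℝ := fun a x =>
      Real.log (1 + α x * a) + (κ * α x * a ^ 2 - (β x + η x) * a) / (1 + α x * a)
    let d : X → ℝ := fun x =>
      if 0 < 4 * κ * (κ + β x + η x) + α x ^ 2 then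
        min (max ((-α x - 2 * κ + Real.sqrt (4 * κ * (κ + β x + η x) + α x ^ 2)) / (2 * κ * α x)) 0) 1
      else 0
    ∀ xstar : X, (∀ x, F (d xstar) xstar ≤ F (d x) x) →
      ∀ a ∈ Set.Icc (0 : ℝ) 1, ∀ x, F (d xstar) xstar ≤ F a x :=
  stmt_8_general κ hκ α β η hα
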